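/- Let n be a positive integer, t > 0, x₀ ∈ ℝ^n, and let μ be the measure on ℝ^n having density z ↦ exp(−‖z − x₀‖² / (2t)) with respect to Lebesgue measure. Then for every ε > 0 and any two centers c₁, c₂ ∈ ℝ^n with ‖c₁ − x₀‖ < ‖c₂ − x₀‖, the Gaussian-weighted mass of the ball around the nearer center is strictly larger: μ(B(c₂, ε)) < μ(B(c₁, ε)), where B(c, ε) denotes the open Euclidean ball of radius ε centered at c. -/

import Mathlib

open MeasureTheory Metric Set
open scoped RealInnerProductSpace ENNReal

section aux

variable {E : Type*} [NormedAddCommGroup E] [InnerProductSpace ℝ E]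

/-- inner product helper -/
lemma inner_half_sum_sub (p q : E) :
    ⟪(2⁻¹ : ℝ) • (p + q), p - q⟫ = 2⁻¹ * (‖p‖ ^ 2 - ‖q‖ ^ 2) := by
  simp [real_inner_smul_left, inner_add_left, inner_sub_right,
    real_inner_self_eq_norm_sq, real_inner_comm p q]
  ring

/-- the reflection across the hyperplane through 0 orthogonal to `v`, as a linear map -/
noncomputable def reflMap (v : E) : E →ₗ[ℝ] E where
  toFun w := w - ((2 * ⟪w, v⟫) / ‖v‖ ^ 2) • v
  map_add' w w' := by
    simp only [inner_add_left]
    rw [mul_add, add_div, add_smul]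
    abel
  map_smul' r w := by
    simp only [real_inner_smul_left, RingHom.id_apply, smul_sub, smul_smul]
    congr 1
    ring_nf

lemma reflMap_apply (v w : E) :
    reflMap v w = w - ((2 * ⟪w, v⟫) / ‖v‖ ^ 2) • v := rfl

lemma reflMap_inner (v : E) (hv : v ≠ 0) (w : E) :
    ⟪reflMap v w, v⟫ = -⟪w, v⟫ := by
  have hnv : ‖v‖ ≠ 0 := norm_ne_zero_iff.mpr hv
  rw [reflMap_apply, inner_sub_left, real_inner_smul_left, real_inner_self_eq_norm_sq]
  field_simp
  ring

lemma reflMap_involutive (v : E) (hv : v ≠ 0) :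
    Function.Involutive (reflMap v) := by
  intro w
  rw [reflMap_apply (w := reflMap v w), reflMap_inner v hv, reflMap_apply]
  have hnv : ‖v‖ ≠ 0 := norm_ne_zero_iff.mpr hv
  rw [mul_neg, neg_div, neg_smul, sub_neg_eq_add]
  abel

lemma reflMap_norm (v : E) (hv : v ≠ 0) (w : E) :
    ‖reflMap v w‖ = ‖w‖ := by
  have hnv : ‖v‖ ≠ 0 := norm_ne_zero_iff.mpr hv
  have h2 : ‖reflMap v w‖ ^ 2 = ‖w‖ ^ 2 := by
    rw [reflMap_apply, norm_sub_sq_real, real_inner_smul_right, norm_smul, mul_pow]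
    rw [Real.norm_eq_abs, sq_abs]
    field_simp
    ring
  nlinarith [norm_nonneg (reflMap v w), norm_nonneg w]

/-- the reflection as a linear isometry equivalence -/
noncomputable def reflIso (v : E) (hv : v ≠ 0) : E ≃ₗᵢ[ℝ] E where
  toLinearEquiv := LinearEquiv.ofInvolutive (reflMap v) (reflMap_involutive v hv)
  norm_map' := reflMap_norm v hv

lemma reflIso_apply (v : E) (hv : v ≠ 0) (w : E) :
    reflIso v hv w = w - ((2 * ⟪w, v⟫) / ‖v‖ ^ 2) • v := rfl

lemma reflIso_smul (v : E) (hv : v ≠ 0) (r : ℝ) :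
    reflIso v hv (r • v) = -(r • v) := by
  have hnv : ‖v‖ ≠ 0 := norm_ne_zero_iff.mpr hv
  rw [reflIso_apply, real_inner_smul_left, real_inner_self_eq_norm_sq]
  have : (2 * (r * ‖v‖ ^ 2)) / ‖v‖ ^ 2 = 2 * r := by field_simp
  rw [this]
  module

end aux

set_option maxHeartbeats 2000000 in
open scoped RealInnerProductSpace in
/-- **Gaussian mass of a ball is strictly decreasing in the distance of its center
from the Gaussian's center** (core estimate in the hitting-location lemma).
Let `μ` be the measure on `ℝ^n` with density `z ↦ exp (-‖z - x₀‖² / (2t))` with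
respect to Lebesgue measure, `t > 0`. If `‖c₁ - x₀‖ < ‖c₂ - x₀‖`, then for every
`ε > 0` the `μ`-mass of the ball `B(c₂, ε)` is strictly smaller than that of
`B(c₁, ε)`. -/
theorem gaussian_ball_mass_lt
    (n : ℕ) (hn : 0 < n) (t : ℝ) (ht : 0 < t)
    (x₀ : EuclideanSpace ℝ (Fin n))
    (μ : Measure (EuclideanSpace ℝ (Fin n)))
    (hμ : μ = volume.withDensity
      (fun z => ENNReal.ofReal (Real.exp (-‖z - x₀‖ ^ 2 / (2 * t)))))
    (ε : ℝ) (hε : 0 < ε)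
    (c₁ c₂ : EuclideanSpace ℝ (Fin n))
    (hc : ‖c₁ - x₀‖ < ‖c₂ - x₀‖) :
    μ (Metric.ball c₂ ε) < μ (Metric.ball c₁ ε) := by
  classical
  have hne : c₂ ≠ c₁ := by
    intro h; rw [h] at hc; exact lt_irrefl _ hc
  set v : EuclideanSpace ℝ (Fin n) := c₂ - c₁ with hv_def
  have hv : v ≠ 0 := sub_ne_zero.mpr hne
  have hd : (0:ℝ) < ‖v‖ := norm_pos_iff.mpr hv
  set d : ℝ := ‖v‖ with hd_def
  set m : EuclideanSpace ℝ (Fin n) := (2⁻¹ : ℝ) • (c₁ + c₂) with hm_def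
  set Λ : EuclideanSpace ℝ (Fin n) ≃ₗᵢ[ℝ] EuclideanSpace ℝ (Fin n) := reflIso v hv with hΛ_def
  set R : EuclideanSpace ℝ (Fin n) → EuclideanSpace ℝ (Fin n) := fun z => Λ (z - m) + m with hR_def
  -- A and its properties
  set A : EuclideanSpace ℝ (Fin n) → ℝ := fun z => ⟪z - m, v⟫ with hA_def
  have hAcont : Continuous A := by
    apply Continuous.inner
    · exact continuous_id.sub continuous_const
    · exact continuous_const
  have hAformula : ∀ z : EuclideanSpace ℝ (Fin n), A z = 2⁻¹ * (‖z - c₁‖ ^ 2 - ‖z - c₂‖ ^ 2) := by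
    intro z
    have h1 : z - m = (2⁻¹ : ℝ) • ((z - c₁) + (z - c₂)) := by
      rw [hm_def]; module
    have h2 : v = (z - c₁) - (z - c₂) := by rw [hv_def]; module
    rw [hA_def]
    simp only
    rw [h1, h2, inner_half_sum_sub]
  -- b > 0
  set b : ℝ := ⟪m - x₀, v⟫ with hb_def
  have hb : 0 < b := by
    have h1 : m - x₀ = (2⁻¹ : ℝ) • ((c₂ - x₀) + (c₁ - x₀)) := by
      rw [hm_def]; module
    have h2 : v = (c₂ - x₀) - (c₁ - x₀) := by rw [hv_def]; module
    have : b = 2⁻¹ * (‖c₂ - x₀‖ ^ 2 - ‖c₁ - x₀‖ ^ 2) := by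
      rw [hb_def, h1, h2, inner_half_sum_sub]
    rw [this]
    have : ‖c₁ - x₀‖ ^ 2 < ‖c₂ - x₀‖ ^ 2 := by
      nlinarith [norm_nonneg (c₁ - x₀), norm_nonneg (c₂ - x₀)]
    linarith
  -- R basics
  have hRc₁ : R c₁ = c₂ := by
    have h1 : c₁ - m = (-2⁻¹ : ℝ) • v := by rw [hm_def, hv_def]; module
    rw [hR_def]
    simp only
    rw [h1, hΛ_def, reflIso_smul]
    rw [hm_def, hv_def]; module
  have hRinvol : ∀ z, R (R z) = z := by
    intro z
    rw [hR_def]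
    simp only [add_sub_cancel_right]
    have : Λ (Λ (z - m)) = z - m := reflMap_involutive v hv (z - m)
    rw [this]; abel
  have hRc₂ : R c₂ = c₁ := by rw [← hRc₁, hRinvol]
  have hRisom : ∀ z w, dist (R z) (R w) = dist z w := by
    intro z w
    rw [hR_def]
    simp only
    rw [dist_add_right, Λ.dist_map, dist_sub_right]
  -- measure preserving
  have hRmp : MeasurePreserving R volume volume := by
    have h1 : MeasurePreserving (fun z : EuclideanSpace ℝ (Fin n) => z - m)
        volume volume := measurePreserving_sub_right volume m
    have h2 : MeasurePreserving (fun z : EuclideanSpace ℝ (Fin n) => z + m)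
        volume volume := measurePreserving_add_right volume m
    exact h2.comp (Λ.measurePreserving.comp h1)
  have hARz : ∀ z, A (R z) = -A z := by
    intro z
    rw [hA_def, hR_def]
    simp only [add_sub_cancel_right]
    exact reflMap_inner v hv (z - m)
  -- key quadratic identity
  have hKey : ∀ z : EuclideanSpace ℝ (Fin n),
      ‖R z - x₀‖ ^ 2 = ‖z - x₀‖ ^ 2 - 4 * A z * b / ‖v‖ ^ 2 := by
    intro z
    have hnv : ‖v‖ ≠ 0 := hd.ne'
    have hz : R z - x₀ = (z - x₀) - ((2 * A z) / ‖v‖ ^ 2) • v := by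
      rw [hR_def, hΛ_def, hA_def]
      simp only [reflIso_apply]
      module
    have hzb : ⟪z - x₀, v⟫ = A z + b := by
      have : z - x₀ = (z - m) + (m - x₀) := by module
      rw [this, inner_add_left, hA_def, hb_def]
    rw [hz, norm_sub_sq_real, real_inner_smul_right, hzb, norm_smul,
      Real.norm_eq_abs, mul_pow, sq_abs]
    field_simp
    ring
  -- φ
  set φ : EuclideanSpace ℝ (Fin n) → ℝ≥0∞ :=
    fun z => ENNReal.ofReal (Real.exp (-‖z - x₀‖ ^ 2 / (2 * t))) with hφ_def
  have hφcont : Continuous φ := by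
    apply ENNReal.continuous_ofReal.comp
    apply Real.continuous_exp.comp
    apply Continuous.div_const
    apply Continuous.neg
    exact ((continuous_id.sub continuous_const).norm).pow 2
  have hφmeas : Measurable φ := hφcont.measurable
  have hφRmeas : Measurable fun z => φ (R z) := hφmeas.comp hRmp.measurable
  have hφle1 : ∀ z, φ z ≤ 1 := by
    intro z
    rw [hφ_def]
    simp only
    rw [← ENNReal.ofReal_one]
    apply ENNReal.ofReal_le_ofReal
    rw [Real.exp_le_one_iff]
    apply div_nonpos_of_nonpos_of_nonneg
    · simp [sq_nonneg]
    · linarith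
  -- pointwise comparisons
  have hlt : ∀ z, A z < 0 → φ (R z) < φ z := by
    intro z hz
    have h1 : ‖z - x₀‖ ^ 2 < ‖R z - x₀‖ ^ 2 := by
      rw [hKey z]
      have h4 : 4 * A z * b / ‖v‖ ^ 2 < 0 :=
        div_neg_of_neg_of_pos (by nlinarith) (by positivity)
      linarith
    rw [hφ_def]
    simp only
    rw [ENNReal.ofReal_lt_ofReal_iff (Real.exp_pos _)]
    rw [Real.exp_lt_exp]
    have h2t : (0:ℝ) < 2 * t := by linarith
    exact (div_lt_div_iff_of_pos_right h2t).mpr (by linarith)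
  have heqZ : ∀ z, A z = 0 → φ (R z) = φ z := by
    intro z hz
    have h1 : ‖R z - x₀‖ ^ 2 = ‖z - x₀‖ ^ 2 := by
      rw [hKey z, hz]; ring
    rw [hφ_def]
    simp only [h1]
  -- sets
  set B₁ : Set (EuclideanSpace ℝ (Fin n)) := Metric.ball c₁ ε with hB₁_def
  set B₂ : Set (EuclideanSpace ℝ (Fin n)) := Metric.ball c₂ ε with hB₂_def
  set Hlt : Set (EuclideanSpace ℝ (Fin n)) := {z | A z < 0} with hHlt_def
  set Hle : Set (EuclideanSpace ℝ (Fin n)) := {z | A z ≤ 0} with hHle_def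
  set Hge : Set (EuclideanSpace ℝ (Fin n)) := {z | 0 ≤ A z} with hHge_def
  set Z : Set (EuclideanSpace ℝ (Fin n)) := {z | A z = 0} with hZ_def
  have hB₁m : MeasurableSet B₁ := measurableSet_ball
  have hB₂m : MeasurableSet B₂ := measurableSet_ball
  have hHltm : MeasurableSet Hlt := measurableSet_lt hAcont.measurable measurable_const
  have hHlem : MeasurableSet Hle := measurableSet_le hAcont.measurable measurable_const
  have hHgem : MeasurableSet Hge := measurableSet_le measurable_const hAcont.measurable
  have hZm : MeasurableSet Z := (hAcont.measurable) (measurableSet_singleton 0)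
  -- preimages under R
  have hpreB₂ : R ⁻¹' B₂ = B₁ := by
    ext z
    simp only [Set.mem_preimage, hB₁_def, hB₂_def, Metric.mem_ball]
    rw [← hRc₁, hRisom]
  have hpreB₁ : R ⁻¹' B₁ = B₂ := by
    ext z
    simp only [Set.mem_preimage, hB₁_def, hB₂_def, Metric.mem_ball]
    rw [← hRc₂, hRisom]
  have hpreHle : R ⁻¹' Hle = Hge := by
    ext z
    simp only [Set.mem_preimage, hHle_def, hHge_def, Set.mem_setOf_eq, hARz]
    constructor <;> intro h <;> linarith
  have hpreHge : R ⁻¹' Hge = Hle := by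
    ext z
    simp only [Set.mem_preimage, hHge_def, hHle_def, Set.mem_setOf_eq, hARz]
    constructor <;> intro h <;> linarith
  -- change of variables
  have key1 : ∀ (s : Set (EuclideanSpace ℝ (Fin n))), MeasurableSet s →
      ∫⁻ z in s, φ z = ∫⁻ z in R ⁻¹' s, φ (R z) :=
    fun s hs => (hRmp.setLIntegral_comp_preimage hs hφmeas).symm
  -- inclusion
  have hsub : B₂ ∩ Hlt ⊆ B₁ ∩ Hlt := by
    rintro z ⟨hzB, hzA⟩
    refine ⟨?_, hzA⟩
    rw [hB₂_def, Metric.mem_ball, dist_eq_norm] at hzB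
    rw [hB₁_def, Metric.mem_ball, dist_eq_norm]
    have hf := hAformula z
    rw [hHlt_def, Set.mem_setOf_eq] at hzA
    nlinarith [norm_nonneg (z - c₁), norm_nonneg (z - c₂)]
  set T : Set (EuclideanSpace ℝ (Fin n)) := (B₁ ∩ Hlt) \ B₂ with hT_def
  have hTm : MeasurableSet T := (hB₁m.inter hHltm).diff hB₂m
  -- splittings
  have hsplit1 : B₁ = (B₁ ∩ Hlt) ∪ (B₁ ∩ Hge) := by
    ext z; constructor
    · intro h
      rcases lt_or_ge (A z) 0 with h' | h'
      · exact Or.inl ⟨h, h'⟩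
      · exact Or.inr ⟨h, h'⟩
    · rintro (⟨h, -⟩ | ⟨h, -⟩) <;> exact h
  have hdisj1 : Disjoint (B₁ ∩ Hlt) (B₁ ∩ Hge) := by
    rw [Set.disjoint_left]
    rintro z ⟨-, h1⟩ ⟨-, h2⟩
    simp only [hHlt_def, hHge_def, Set.mem_setOf_eq] at h1 h2
    linarith
  have hsplit2 : B₁ ∩ Hlt = (B₂ ∩ Hlt) ∪ T := by
    ext z; constructor
    · intro h
      by_cases hz : z ∈ B₂
      · exact Or.inl ⟨hz, h.2⟩
      · exact Or.inr ⟨h, hz⟩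
    · rintro (h | h)
      · exact hsub h
      · exact h.1
  have hdisj2 : Disjoint (B₂ ∩ Hlt) T := by
    rw [Set.disjoint_left]
    rintro z ⟨h1, -⟩ ⟨-, h2⟩
    exact h2 h1
  have hsplit3 : B₂ ∩ Hle = (B₂ ∩ Hlt) ∪ (B₂ ∩ Z) := by
    ext z; constructor
    · rintro ⟨h1, h2⟩
      simp only [hHle_def, Set.mem_setOf_eq] at h2
      rcases lt_or_eq_of_le h2 with h | h
      · exact Or.inl ⟨h1, h⟩
      · exact Or.inr ⟨h1, h⟩
    · rintro (⟨h1, h2⟩ | ⟨h1, h2⟩)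
      · simp only [hHlt_def, Set.mem_setOf_eq] at h2
        exact ⟨h1, le_of_lt h2⟩
      · simp only [hZ_def, Set.mem_setOf_eq] at h2
        exact ⟨h1, le_of_eq h2⟩
  have hdisj3 : Disjoint (B₂ ∩ Hlt) (B₂ ∩ Z) := by
    rw [Set.disjoint_left]
    rintro z ⟨-, h1⟩ ⟨-, h2⟩
    simp only [hHlt_def, hZ_def, Set.mem_setOf_eq] at h1 h2
    exact (ne_of_lt h1) h2
  -- φ∘R = φ on Z
  have hZeq : ∫⁻ z in B₂ ∩ Z, φ (R z) = ∫⁻ z in B₂ ∩ Z, φ z :=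
    setLIntegral_congr_fun (hB₂m.inter hZm) (fun z hz => heqZ z hz.2)
  -- the two decompositions
  set X : ℝ≥0∞ := (∫⁻ z in B₂ ∩ Hlt, φ (R z)) + (∫⁻ z in B₂ ∩ Hlt, φ z)
    + (∫⁻ z in B₂ ∩ Z, φ z) with hX_def
  have hμB₂ : μ B₂ = (∫⁻ z in T, φ (R z)) + X := by
    have e0 : μ B₂ = ∫⁻ z in B₂, φ z := by rw [hμ, withDensity_apply _ hB₂m]
    have e1 : ∫⁻ z in B₁ ∩ Hge, φ (R z) = ∫⁻ z in B₂ ∩ Hle, φ z := by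
      rw [key1 (B₂ ∩ Hle) (hB₂m.inter hHlem), Set.preimage_inter, hpreB₂, hpreHle]
    calc μ B₂ = ∫⁻ z in B₂, φ z := e0
      _ = ∫⁻ z in R ⁻¹' B₂, φ (R z) := key1 _ hB₂m
      _ = ∫⁻ z in B₁, φ (R z) := by rw [hpreB₂]
      _ = ∫⁻ z in (B₁ ∩ Hlt) ∪ (B₁ ∩ Hge), φ (R z) := by rw [← hsplit1]
      _ = (∫⁻ z in B₁ ∩ Hlt, φ (R z)) + (∫⁻ z in B₁ ∩ Hge, φ (R z)) :=
          lintegral_union (hB₁m.inter hHgem) hdisj1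
      _ = (∫⁻ z in (B₂ ∩ Hlt) ∪ T, φ (R z)) + (∫⁻ z in B₂ ∩ Hle, φ z) := by
          rw [← hsplit2, e1]
      _ = ((∫⁻ z in B₂ ∩ Hlt, φ (R z)) + (∫⁻ z in T, φ (R z)))
          + ((∫⁻ z in B₂ ∩ Hlt, φ z) + (∫⁻ z in B₂ ∩ Z, φ z)) := by
          rw [lintegral_union hTm hdisj2, hsplit3,
            lintegral_union (hB₂m.inter hZm) hdisj3]
      _ = (∫⁻ z in T, φ (R z)) + X := by rw [hX_def]; ring
  have hμB₁ : μ B₁ = (∫⁻ z in T, φ z) + X := by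
    have e0 : μ B₁ = ∫⁻ z in B₁, φ z := by rw [hμ, withDensity_apply _ hB₁m]
    have e1 : ∫⁻ z in B₁ ∩ Hge, φ z = ∫⁻ z in B₂ ∩ Hle, φ (R z) := by
      rw [key1 (B₁ ∩ Hge) (hB₁m.inter hHgem), Set.preimage_inter, hpreB₁, hpreHge]
    calc μ B₁ = ∫⁻ z in B₁, φ z := e0
      _ = ∫⁻ z in (B₁ ∩ Hlt) ∪ (B₁ ∩ Hge), φ z := by rw [← hsplit1]
      _ = (∫⁻ z in B₁ ∩ Hlt, φ z) + (∫⁻ z in B₁ ∩ Hge, φ z) :=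
          lintegral_union (hB₁m.inter hHgem) hdisj1
      _ = (∫⁻ z in (B₂ ∩ Hlt) ∪ T, φ z) + (∫⁻ z in B₂ ∩ Hle, φ (R z)) := by
          rw [← hsplit2, e1]
      _ = ((∫⁻ z in B₂ ∩ Hlt, φ z) + (∫⁻ z in T, φ z))
          + ((∫⁻ z in B₂ ∩ Hlt, φ (R z)) + (∫⁻ z in B₂ ∩ Z, φ (R z))) := by
          rw [lintegral_union hTm hdisj2, hsplit3,
            lintegral_union (hB₂m.inter hZm) hdisj3]
      _ = (∫⁻ z in T, φ z) + X := by rw [hX_def, hZeq]; ring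
  -- finiteness
  have hIle : ∀ (f : EuclideanSpace ℝ (Fin n) → ℝ≥0∞), (∀ z, f z ≤ 1) →
      ∀ s : Set (EuclideanSpace ℝ (Fin n)), ∫⁻ z in s, f z ≤ volume s := by
    intro f hf s
    calc ∫⁻ z in s, f z ≤ ∫⁻ _ in s, 1 := lintegral_mono fun z => hf z
      _ = volume s := setLIntegral_one s
  have hball₂ : volume B₂ ≠ ⊤ := measure_ball_lt_top.ne
  have hball₁ : volume B₁ ≠ ⊤ := measure_ball_lt_top.ne
  have hXfin : X ≠ ⊤ := by
    rw [hX_def]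
    have h1 := (hIle (fun z => φ (R z)) (fun z => hφle1 (R z)) (B₂ ∩ Hlt)).trans
      (measure_mono Set.inter_subset_left)
    have h2 := (hIle φ hφle1 (B₂ ∩ Hlt)).trans (measure_mono Set.inter_subset_left)
    have h3 := (hIle φ hφle1 (B₂ ∩ Z)).trans (measure_mono Set.inter_subset_left)
    exact ENNReal.add_ne_top.mpr ⟨ENNReal.add_ne_top.mpr
      ⟨ne_top_of_le_ne_top hball₂ h1, ne_top_of_le_ne_top hball₂ h2⟩,
      ne_top_of_le_ne_top hball₂ h3⟩
  have hTfin : ∫⁻ z in T, φ (R z) ≠ ⊤ := by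
    refine ne_top_of_le_ne_top hball₁ ?_
    exact (hIle (fun z => φ (R z)) (fun z => hφle1 (R z)) T).trans
      (measure_mono (fun z hz => hz.1.1))
  -- positivity of T
  have hT0 : volume T ≠ 0 := by
    obtain ⟨s₀, hs₀pos, hs₀lt, hs₀big⟩ : ∃ s₀ : ℝ, 0 < s₀ ∧ s₀ < ε ∧ ε < d + s₀ := by
      refine ⟨ε - min ε d / 2, ?_, ?_, ?_⟩
      · have := min_le_left ε d
        have := lt_min hε hd
        linarith
      · have := lt_min hε hd
        linarith
      · have := min_le_right ε d
        linarith
    set w : EuclideanSpace ℝ (Fin n) := c₁ - (s₀ * d⁻¹) • v with hw_def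
    have hq : 0 < s₀ * d⁻¹ := mul_pos hs₀pos (inv_pos.mpr hd)
    have hw1 : ‖w - c₁‖ = s₀ := by
      have e : w - c₁ = -((s₀ * d⁻¹) • v) := by rw [hw_def]; module
      rw [e, norm_neg, norm_smul, Real.norm_eq_abs, abs_of_pos hq, ← hd_def,
        mul_assoc, inv_mul_cancel₀ hd.ne', mul_one]
    have hw2 : ‖w - c₂‖ = d + s₀ := by
      have e : w - c₂ = -((1 + s₀ * d⁻¹) • v) := by rw [hw_def, hv_def]; module
      rw [e, norm_neg, norm_smul, Real.norm_eq_abs, abs_of_pos (by linarith), ← hd_def,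
        add_mul, one_mul, mul_assoc, inv_mul_cancel₀ hd.ne', mul_one]
    have hwS : w ∈ (B₁ ∩ (Metric.closedBall c₂ ε)ᶜ) ∩ Hlt := by
      refine ⟨⟨?_, ?_⟩, ?_⟩
      · rw [hB₁_def, Metric.mem_ball, dist_eq_norm, hw1]; exact hs₀lt
      · intro hcb
        rw [Metric.mem_closedBall, dist_eq_norm, hw2] at hcb
        linarith
      · rw [hHlt_def, Set.mem_setOf_eq, hAformula w, hw1, hw2]
        have hexp : s₀ ^ 2 - (d + s₀) ^ 2 = -(d ^ 2 + 2 * (d * s₀)) := by ring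
        rw [hexp]
        have h1 : 0 < d ^ 2 := pow_pos hd 2
        have h2 : 0 < d * s₀ := mul_pos hd hs₀pos
        linarith
    have hSopen : IsOpen ((B₁ ∩ (Metric.closedBall c₂ ε)ᶜ) ∩ Hlt) := by
      apply IsOpen.inter
      · exact Metric.isOpen_ball.inter Metric.isClosed_closedBall.isOpen_compl
      · exact isOpen_lt hAcont continuous_const
    have hpos : 0 < volume ((B₁ ∩ (Metric.closedBall c₂ ε)ᶜ) ∩ Hlt) :=
      hSopen.measure_pos volume ⟨w, hwS⟩
    have hsub' : (B₁ ∩ (Metric.closedBall c₂ ε)ᶜ) ∩ Hlt ⊆ T := by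
      rintro z ⟨⟨hz1, hz2⟩, hz3⟩
      exact ⟨⟨hz1, hz3⟩, fun hzB => hz2 (Metric.ball_subset_closedBall hzB)⟩
    exact (lt_of_lt_of_le hpos (measure_mono hsub')).ne'
  -- core strict inequality
  have hcore : (∫⁻ z in T, φ (R z)) < ∫⁻ z in T, φ z := by
    apply setLIntegral_strict_mono hTm hT0 hφmeas hTfin
    exact ae_of_all _ fun z hz => hlt z hz.1.2
  rw [hμB₂, hμB₁]
  exact ENNReal.add_lt_add_right hXfin hcore
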